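/- Let f(k) = (λ^k / k!) · e^{-λ} with λ > 0. For every integer k with 1 ≤ k ≤ 2λ, f(k) ≥ (1/(e√k)) · exp(-(k-λ)²/λ). -/

import Mathlib

open Real Nat

/-
Stirling's sequence `n! / (√(2n) (n/e)^n)` decreases from its value `e/√2` at `n = 1`, which gives
`k! ≤ e √k (k/e)^k`, hence `λ^k/k! · e^{-λ} ≥ (eλ/k)^k e^{-λ} / (e √k)`. Taking logarithms,
`(eλ/k)^k e^{-λ} ≥ exp(-(k-λ)²/λ)` is `k (1 + log(λ/k)) - λ ≥ -(k-λ)²/λ`, which follows from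
`log t ≥ 1 - 1/t` at `t = λ/k`.
-/

theorem Stirling.stirlingSeq_le_exp_one_div_sqrt_two {n : ℕ} (hn : n ≠ 0) :
    Stirling.stirlingSeq n ≤ exp 1 / √2 := by
  obtain ⟨m, rfl⟩ := Nat.exists_eq_succ_of_ne_zero hn
  rw [← Stirling.stirlingSeq_one]
  exact Stirling.stirlingSeq'_antitone (Nat.zero_le m)

theorem factorial_le_exp_one_mul_sqrt_mul_pow {n : ℕ} (hn : n ≠ 0) :
    (n ! : ℝ) ≤ exp 1 * √n * (n / exp 1) ^ n := by
  have hpos : 0 < √(2 * n) * (n / exp 1) ^ n := by positivity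
  calc (n ! : ℝ) = Stirling.stirlingSeq n * (√(2 * n) * (n / exp 1) ^ n) := by
        rw [Stirling.stirlingSeq, div_mul_cancel₀ _ hpos.ne']
    _ ≤ exp 1 / √2 * (√(2 * n) * (n / exp 1) ^ n) :=
        mul_le_mul_of_nonneg_right (Stirling.stirlingSeq_le_exp_one_div_sqrt_two hn) hpos.le
    _ = exp 1 * √n * (n / exp 1) ^ n := by
        rw [sqrt_mul zero_le_two]
        field_simp

theorem exp_one_mul_div_pow_div_le_pow_div_factorial {n : ℕ} (hn : n ≠ 0) {y : ℝ} (hy : 0 ≤ y) :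
    (exp 1 * y / n) ^ n / (exp 1 * √n) ≤ y ^ n / n ! := by
  have hn' : (0 : ℝ) < n := by positivity
  calc (exp 1 * y / n) ^ n / (exp 1 * √n) = y ^ n / (exp 1 * √n * (n / exp 1) ^ n) := by
        rw [div_pow, div_pow, mul_pow]
        field_simp
    _ ≤ y ^ n / n ! :=
        div_le_div_of_nonneg_left (by positivity) (by positivity)
          (factorial_le_exp_one_mul_sqrt_mul_pow hn)

theorem neg_sq_sub_div_le_mul_one_add_log_div_sub {x y : ℝ} (hx : 0 < x) (hy : 0 < y) :
    -(x - y) ^ 2 / y ≤ x * (1 + log (y / x)) - y := by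
  have hlog : 1 - x / y ≤ log (y / x) := by
    simpa using one_sub_inv_le_log_of_pos (div_pos hy hx)
  calc -(x - y) ^ 2 / y = x * (1 + (1 - x / y)) - y := by
        field_simp
        ring
    _ ≤ x * (1 + log (y / x)) - y := by gcongr

theorem exp_neg_sq_sub_div_le_pow_mul_exp_neg {n : ℕ} (hn : n ≠ 0) {y : ℝ} (hy : 0 < y) :
    exp (-((n : ℝ) - y) ^ 2 / y) ≤ (exp 1 * y / n) ^ n * exp (-y) := by
  have hn' : (0 : ℝ) < n := by positivity
  have hbase : exp 1 * y / n = exp (1 + log (y / n)) := by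
    rw [exp_add, exp_log (div_pos hy hn'), mul_div_assoc]
  rw [hbase, ← exp_nat_mul, ← exp_add, exp_le_exp, ← sub_eq_add_neg]
  exact neg_sq_sub_div_le_mul_one_add_log_div_sub hn' hy

theorem stmt_7_general (lam : ℝ) (hlam : 0 < lam) (k : ℕ) (hk1 : 1 ≤ k) :
    lam ^ k / (Nat.factorial k) * Real.exp (-lam) ≥
      1 / (Real.exp 1 * Real.sqrt k) * Real.exp (-((k : ℝ) - lam) ^ 2 / lam) := by
  have hk : k ≠ 0 := Nat.one_le_iff_ne_zero.mp hk1
  calc 1 / (exp 1 * √k) * exp (-((k : ℝ) - lam) ^ 2 / lam)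
      ≤ 1 / (exp 1 * √k) * ((exp 1 * lam / k) ^ k * exp (-lam)) := by
        gcongr
        exact exp_neg_sq_sub_div_le_pow_mul_exp_neg hk hlam
    _ = (exp 1 * lam / k) ^ k / (exp 1 * √k) * exp (-lam) := by ring
    _ ≤ lam ^ k / k ! * exp (-lam) := by
        gcongr ?_ * _
        exact exp_one_mul_div_pow_div_le_pow_div_factorial hk hlam.le

theorem stmt_7 (lam : ℝ) (hlam : 0 < lam) (k : ℕ) (hk1 : 1 ≤ k)
    (hk2 : (k : ℝ) ≤ 2 * lam) :
    lam ^ k / (Nat.factorial k) * Real.exp (-lam) ≥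
      1 / (Real.exp 1 * Real.sqrt k) * Real.exp (-((k : ℝ) - lam) ^ 2 / lam) :=
  stmt_7_general lam hlam k hk1
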